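/- If n = dim V is even, then 𝓕² : Λ(V) → Λ(V) (the composite of the Grassmann Fourier transform Λ(V) → Λ(V*) with the analogous transform Λ(V*) → Λ(V)) equals the identity map. -/

import Mathlib

/-!
STATEMENT 7.  Context: as in Statement 6, `Egr n = Λ(V* ⊕ V)` models the ℤ₂-graded
tensor product `Λ(V*) ⊗ Λ(V)` for an `n`-dimensional complex space `V`, with
generators `psv a = ψ^a` (of `Λ(V)`) and `psb a = ψ̄_a` (of `Λ(V*)`).  `Ber` is the
Berezin integral `∫dψ` over the `ψ`'s (normalized by `∫dψ ψ^1⋯ψ^n = 1`), `BerD`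
the Berezin integral `∫dψ̄` over the `ψ̄`'s (normalized by `∫dψ̄ ψ̄_1⋯ψ̄_n = 1`).
The Grassmann Fourier transform `Λ(V) → Λ(V*)` is `η ↦ ∫dψ (η · e^{i ψ̄_j ψ^j})`
and the analogous transform `Λ(V*) → Λ(V)` is `ξ ↦ ∫dψ̄ (ξ · e^{i ψ^j ψ̄_j})`.

Conclusion: if `n` is even, then `𝓕² : Λ(V) → Λ(V)` is the identity, i.e. for every
`η` in the subalgebra `Λ(V)`, `𝓕'(𝓕(η)) = η`.
-/

open Finset

noncomputable section

/-- `Λ(V* ⊕ V)`, a model of the ℤ₂-graded tensor product `Λ(V*) ⊗ Λ(V)`. -/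
abbrev Egr (n : ℕ) := ExteriorAlgebra ℂ ((Fin n → ℂ) × (Fin n → ℂ))

/-- The generators `ψ^a` of the `Λ(V)` factor. -/
def psv (n : ℕ) (a : Fin n) : Egr n := ExteriorAlgebra.ι ℂ (0, Pi.single a 1)

/-- The generators `ψ̄_a` of the `Λ(V*)` factor. -/
def psb (n : ℕ) (a : Fin n) : Egr n := ExteriorAlgebra.ι ℂ (Pi.single a 1, 0)

/-- The top monomial `ψ^1 ∧ … ∧ ψ^n`. -/
def psvTop (n : ℕ) : Egr n := ((List.finRange n).map (psv n)).prod

/-- The subalgebra `Λ(V*) ⊆ Λ(V* ⊕ V)`. -/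
def AlgD (n : ℕ) : Subalgebra ℂ (Egr n) := Algebra.adjoin ℂ (Set.range (psb n))

/-- The subspace `Λ¹(V) ⊆ Λ(V* ⊕ V)`; `(PV n) ^ k` is `Λ^k(V)`. -/
def PV (n : ℕ) : Submodule ℂ (Egr n) := Submodule.span ℂ (Set.range (psv n))

/-- The Fourier kernel `e^{i ψ̄_j ⊗ ψ^j}`; the series terminates at the n-th power. -/
def fourierKernel (n : ℕ) : Egr n :=
  ∑ m ∈ range (n + 1),
    ((Nat.factorial m : ℂ))⁻¹ • (Complex.I • ∑ j, psb n j * psv n j) ^ m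


/-- The top monomial `ψ̄_1 ∧ … ∧ ψ̄_n`. -/
def psbTop (n : ℕ) : Egr n := ((List.finRange n).map (psb n)).prod

/-- The subalgebra `Λ(V) ⊆ Λ(V* ⊕ V)`. -/
def AlgV (n : ℕ) : Subalgebra ℂ (Egr n) := Algebra.adjoin ℂ (Set.range (psv n))

/-- The subspace `Λ¹(V*)`; `(PD n) ^ k` is `Λ^k(V*)`. -/
def PD (n : ℕ) : Submodule ℂ (Egr n) := Submodule.span ℂ (Set.range (psb n))

/-- The kernel `e^{i ψ^j ⊗ ψ̄_j}` of the transform `Λ(V*) → Λ(V)`. -/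
def fourierKernelD (n : ℕ) : Egr n :=
  ∑ m ∈ range (n + 1),
    ((Nat.factorial m : ℂ))⁻¹ • (Complex.I • ∑ j, psv n j * psb n j) ^ m

/-!
Since the `ψ̄_j ψ^j` are central and square to zero, `e^{i ψ̄_j ψ^j} = ∏_j (1 + i ψ̄_j ψ^j)`.
Multiplying a monomial `ψ^S` by it and integrating out the `ψ`'s keeps only the term of top
`ψ`-degree, `ψ^S ∏_{j ∉ S} i ψ̄_j ψ^j`, so `𝓕 ψ^S = c_S ψ̄^{Sᶜ}` with `c_S` equal to
`i^{|Sᶜ|}` times a reordering sign; symmetrically `𝓕 ψ̄^{Sᶜ} = c'_{Sᶜ} ψ^S`. The inversions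
between `S` and `Sᶜ`, counted in both orders, add up to `|S| |Sᶜ|`, so the signs combine to
`(-1)^{n(n-1)/2}` and `𝓕² = i^n (-1)^{n(n-1)/2}`, which is `1` for even `n`.
-/

lemma Nat.add_choose_two (a b : ℕ) : (a + b).choose 2 = a.choose 2 + b.choose 2 + a * b := by
  induction b with
  | zero => simp
  | succ b ih =>
    rw [← add_assoc, Nat.choose_succ_succ', ih, Nat.choose_succ_succ' b, Nat.choose_one_right,
      Nat.choose_one_right]
    ring

lemma Complex.I_pow_mul_neg_one_pow_choose_two {n : ℕ} (hn : Even n) :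
    Complex.I ^ n * (-1) ^ n.choose 2 = 1 := by
  obtain ⟨p, rfl⟩ := hn
  rw [← two_mul, pow_mul, Complex.I_sq, ← pow_add, two_mul, Nat.add_choose_two]
  refine Even.neg_one_pow ?_
  rw [show p + (p.choose 2 + p.choose 2 + p * p) = (p.choose 2 + p.choose 2) + p * (p + 1) by ring]
  exact (Even.add_self _).add (Nat.even_mul_succ_self p)

section SortedProd

variable {I A : Type*} [LinearOrder I]

def sortedProd [Monoid A] (g : I → A) (s : Finset I) : A :=
  ((s.sort (· ≤ ·)).map g).prod

section Monoid

variable [Monoid A] (g : I → A)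

@[simp]
lemma sortedProd_empty : sortedProd g ∅ = 1 := by
  simp [sortedProd]

@[simp]
lemma sortedProd_singleton (a : I) : sortedProd g {a} = g a := by
  simp [sortedProd]

lemma sortedProd_insert_of_lt {a : I} {s : Finset I} (ha : ∀ x ∈ s, a < x) :
    sortedProd g (insert a s) = g a * sortedProd g s := by
  rw [sortedProd, sort_insert _ (fun x hx => (ha x hx).le) fun h => lt_irrefl a (ha a h)]
  rfl

lemma sortedProd_univ_fin {n : ℕ} (g : Fin n → A) :
    sortedProd g univ = ((List.finRange n).map g).prod := by
  rw [sortedProd, Fin.sort_univ]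

end Monoid

variable {R : Type*} [CommSemiring R] [Semiring A] [Algebra R A] (g : I → A)

lemma sortedProd_mem_adjoin (s : Finset I) : sortedProd g s ∈ Algebra.adjoin R (Set.range g) :=
  Subalgebra.list_prod_mem _ fun x hx => by
    obtain ⟨a, -, rfl⟩ := List.mem_map.mp hx
    exact Algebra.subset_adjoin ⟨a, rfl⟩

lemma sortedProd_mem_span_pow (s : Finset I) :
    sortedProd g s ∈ Submodule.span R (Set.range g) ^ #s := by
  induction s using Finset.induction_on_min with
  | empty =>
    rw [sortedProd_empty, card_empty, pow_zero]
    exact Submodule.one_le.mp le_rfl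
  | insert a s ha ih =>
    rw [sortedProd_insert_of_lt g ha, card_insert_of_notMem fun h => lt_irrefl a (ha a h),
      pow_succ']
    exact Submodule.mul_mem_mul (Submodule.subset_span ⟨a, rfl⟩) ih

lemma sortedProd_smul (c : R) (s : Finset I) :
    sortedProd (fun i => c • g i) s = c ^ #s • sortedProd g s := by
  induction s using Finset.induction_on_min with
  | empty => simp
  | insert a s ha ih =>
    rw [sortedProd_insert_of_lt _ ha, sortedProd_insert_of_lt _ ha, ih,
      card_insert_of_notMem fun h => lt_irrefl a (ha a h), smul_mul_smul_comm, pow_succ']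

end SortedProd

section CrossInversions

variable {I : Type*} [LinearOrder I]

/-- The inversions of the concatenation of `s` and `t`, each listed in increasing order. -/
def crossInversions (s t : Finset I) : ℕ :=
  ∑ a ∈ s, #{b ∈ t | b < a}

lemma crossInversions_insert_of_lt {a : I} {s : Finset I} (ha : ∀ x ∈ s, a < x)
    (t : Finset I) :
    crossInversions (insert a s) t = #{b ∈ t | b < a} + crossInversions s t :=
  sum_insert fun h => lt_irrefl a (ha a h)

lemma crossInversions_add_crossInversions {s t : Finset I} (h : Disjoint s t) :
    crossInversions s t + crossInversions t s = #s * #t := by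
  simp only [crossInversions, card_filter]
  rw [sum_comm (s := t), ← sum_add_distrib, ← smul_eq_mul, ← sum_const]
  refine sum_congr rfl fun a ha => ?_
  rw [← sum_add_distrib, card_eq_sum_ones]
  refine sum_congr rfl fun b hb => ?_
  rcases lt_trichotomy a b with hab | rfl | hab
  · simp [hab, hab.not_gt]
  · exact absurd hb (disjoint_left.mp h ha)
  · simp [hab, hab.not_gt]

variable {R : Type*} [CommRing R] [Fintype I]

/-- The Fourier transform of `ψ^s` is `grassmannFourierCoeff c s • ψ̄^{sᶜ}`: reordering
`∏_{j ∉ s} ψ̄_j ψ^j` into `ψ̄^{sᶜ} ψ^{sᶜ}` costs `(-1) ^ (#sᶜ).choose 2`, merging `ψ^{sᶜ} ψ^s` into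
the top monomial costs `(-1) ^ crossInversions sᶜ s`. -/
def grassmannFourierCoeff (c : R) (s : Finset I) : R :=
  c ^ #sᶜ * (-1) ^ ((#sᶜ).choose 2 + crossInversions sᶜ s)

lemma grassmannFourierCoeff_mul_grassmannFourierCoeff_compl (c : R) (s : Finset I) :
    grassmannFourierCoeff c s * grassmannFourierCoeff c sᶜ
      = c ^ Fintype.card I * (-1) ^ (Fintype.card I).choose 2 := by
  have hcross := crossInversions_add_crossInversions (disjoint_compl_left (a := s))
  rw [grassmannFourierCoeff, grassmannFourierCoeff, compl_compl, ← card_compl_add_card s,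
    Nat.add_choose_two, ← hcross]
  ring

end CrossInversions

section NilpotentExp

variable {I A : Type*}

lemma sum_pow_card_succ_eq_zero [DecidableEq I] [Semiring A] {w : I → A}
    (hcomm : ∀ i j, Commute (w i) (w j)) (hsq : ∀ i, w i * w i = 0) (s : Finset I) :
    (∑ i ∈ s, w i) ^ (#s + 1) = 0 := by
  induction s using Finset.induction_on with
  | empty => simp
  | insert a s ha ih =>
    rw [sum_insert ha, card_insert_of_notMem ha]
    exact (Commute.sum_right _ _ _ fun i _ => hcomm a i)
      |>.add_pow_eq_zero_of_add_le_succ_of_pow_eq_zero (by rw [sq, hsq]) ih (by omega)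

variable {𝕜 : Type*} [LinearOrder I] [Field 𝕜] [CharZero 𝕜] [Ring A] [Algebra 𝕜 A]

lemma sum_range_factorial_inv_smul_sum_pow {w : I → A} (hcomm : ∀ i j, Commute (w i) (w j))
    (hsq : ∀ i, w i * w i = 0) (s : Finset I) :
    ∑ m ∈ range (#s + 1), (m.factorial : 𝕜)⁻¹ • (∑ i ∈ s, w i) ^ m
      = ∑ t ∈ s.powerset, sortedProd w t := by
  let _ : Module ℚ A := Module.compHom A (algebraMap ℚ 𝕜)
  have hexp : ∀ {N : ℕ} {x : A}, x ^ N = 0 →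
      ∑ m ∈ range N, (m.factorial : 𝕜)⁻¹ • x ^ m = IsNilpotent.exp x := by
    intro N x hx
    rw [IsNilpotent.exp_eq_sum hx]
    refine sum_congr rfl fun m _ => ?_
    change _ = (algebraMap ℚ 𝕜 _) • (x ^ m)
    simp
  have hsum : ∀ s : Finset I, (∑ i ∈ s, w i) ^ (#s + 1) = 0 :=
    sum_pow_card_succ_eq_zero hcomm hsq
  rw [hexp (hsum s)]
  induction s using Finset.induction_on_min with
  | empty => simp
  | insert a s ha ih =>
    have haS : a ∉ s := fun h => lt_irrefl a (ha a h)
    have hwa : ∑ m ∈ range 2, (m.factorial : 𝕜)⁻¹ • w a ^ m = 1 + w a := by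
      simp [sum_range_succ]
    rw [sum_insert haS,
      IsNilpotent.exp_add_of_commute (Commute.sum_right _ _ _ fun i _ => hcomm a i)
        ⟨2, by rw [sq, hsq]⟩ ⟨_, hsum s⟩,
      ← hexp (by rw [sq, hsq]), hwa, ih, sum_powerset_insert haS, add_mul, one_mul, mul_sum]
    congr 1
    refine sum_congr rfl fun t ht => (sortedProd_insert_of_lt w fun x hx => ?_).symm
    exact ha x (mem_powerset.mp ht hx)

end NilpotentExp

namespace ExteriorAlgebra

section Signs

variable {R M I : Type*} [CommRing R] [AddCommGroup M] [Module R M] [LinearOrder I]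

lemma ι_mul_ι_anticomm (x y : M) : ι R x * ι R y = -(ι R y * ι R x) :=
  eq_neg_of_add_eq_zero_left (ι_add_mul_swap x y)

lemma ι_mul_ι_mem_center (x y : M) :
    ι R x * ι R y ∈ Subalgebra.center R (ExteriorAlgebra R M) := by
  rw [Subalgebra.mem_center_iff]
  intro b
  induction b using ExteriorAlgebra.induction with
  | algebraMap r => exact Algebra.commutes r _
  | ι z =>
    rw [← mul_assoc, ι_mul_ι_anticomm z x, neg_mul, mul_assoc, ι_mul_ι_anticomm z y, mul_neg,
      neg_neg, ← mul_assoc]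
  | mul a b ha hb => rw [mul_assoc, hb, ← mul_assoc, ha, mul_assoc]
  | add a b ha hb => rw [add_mul, ha, hb, mul_add]

lemma ι_mul_ι_mul_self (x y : M) : ι R x * ι R y * (ι R x * ι R y) = 0 := by
  rw [mul_assoc, ← mul_assoc (ι R y), ι_mul_ι_anticomm y x, neg_mul, mul_assoc, ι_sq_zero,
    mul_zero, neg_zero, mul_zero]

lemma ι_mul_sortedProd (x : M) (v : I → M) (s : Finset I) :
    ι R x * sortedProd (fun i => ι R (v i)) s
      = (-1 : R) ^ #s • (sortedProd (fun i => ι R (v i)) s * ι R x) := by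
  induction s using Finset.induction_on_min with
  | empty => simp
  | insert a s ha ih =>
    rw [sortedProd_insert_of_lt _ ha, card_insert_of_notMem fun h => lt_irrefl a (ha a h),
      ← mul_assoc, ι_mul_ι_anticomm, neg_mul, mul_assoc, ih, mul_smul_comm, ← mul_assoc,
      pow_succ, mul_neg_one, neg_smul]

lemma ι_mul_sortedProd_of_mem (v : I → M) {a : I} {s : Finset I} (ha : a ∈ s) :
    ι R (v a) * sortedProd (fun i => ι R (v i)) s = 0 := by
  induction s using Finset.induction_on_min with
  | empty => simp at ha
  | insert b s hb ih =>
    rw [sortedProd_insert_of_lt _ hb, ← mul_assoc]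
    rcases mem_insert.mp ha with rfl | ha
    · rw [ι_sq_zero, zero_mul]
    · rw [ι_mul_ι_anticomm, neg_mul, mul_assoc, ih ha, mul_zero, neg_zero]

lemma ι_mul_sortedProd_of_notMem (v : I → M) {a : I} {s : Finset I} (ha : a ∉ s) :
    ι R (v a) * sortedProd (fun i => ι R (v i)) s
      = (-1 : R) ^ #{b ∈ s | b < a} • sortedProd (fun i => ι R (v i)) (insert a s) := by
  induction s using Finset.induction_on_min with
  | empty => simp
  | insert b s hb ih =>
    have hab : a ≠ b := fun h => ha (h ▸ mem_insert_self a s)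
    rcases hab.lt_or_gt with hab | hab
    · have hlt : ∀ x ∈ insert b s, a < x := by
        simpa [hab] using fun x hx => hab.trans (hb x hx)
      rw [sortedProd_insert_of_lt _ hlt, sortedProd_insert_of_lt _ hb,
        filter_eq_empty_iff.mpr fun x hx => (hlt x hx).not_gt, card_empty, pow_zero, one_smul]
    · have ih := ih fun h => ha (mem_insert_of_mem h)
      rw [sortedProd_insert_of_lt _ hb, ← mul_assoc, ι_mul_ι_anticomm, neg_mul, mul_assoc, ih,
        Finset.insert_comm, sortedProd_insert_of_lt (s := insert a s) _ (by simpa [hab] using hb),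
        filter_insert, if_pos hab,
        card_insert_of_notMem fun h => lt_irrefl b (hb b (mem_filter.mp h).1), mul_smul_comm,
        pow_succ, mul_neg_one, neg_smul]

variable (v : I → M)

lemma sortedProd_mul_sortedProd_of_disjoint {s t : Finset I} (h : Disjoint s t) :
    sortedProd (fun i => ι R (v i)) s * sortedProd (fun i => ι R (v i)) t
      = (-1 : R) ^ crossInversions s t • sortedProd (fun i => ι R (v i)) (s ∪ t) := by
  induction s using Finset.induction_on_min with
  | empty => simp [crossInversions]
  | insert a s ha ih =>
    have haS : a ∉ s := fun h => lt_irrefl a (ha a h)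
    have haT : a ∉ t := disjoint_left.mp h (mem_insert_self a s)
    have hfilter : #{b ∈ s ∪ t | b < a} = #{b ∈ t | b < a} := by
      rw [filter_union, filter_eq_empty_iff.mpr fun x hx => (ha x hx).not_gt, empty_union]
    rw [sortedProd_insert_of_lt _ ha, mul_assoc,
      ih (disjoint_of_subset_left (subset_insert a s) h), mul_smul_comm,
      ι_mul_sortedProd_of_notMem v (by simp [haS, haT]), smul_smul, hfilter,
      ← pow_add, crossInversions_insert_of_lt ha, insert_union, add_comm]

lemma sortedProd_mul_sortedProd_of_not_disjoint {s t : Finset I} (h : ¬Disjoint s t) :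
    sortedProd (fun i => ι R (v i)) s * sortedProd (fun i => ι R (v i)) t = 0 := by
  induction s using Finset.induction_on_min with
  | empty => simp at h
  | insert a s ha ih =>
    rw [sortedProd_insert_of_lt _ ha, mul_assoc]
    by_cases hst : Disjoint s t
    · have haT : a ∈ t := by
        by_contra haT
        exact h (disjoint_insert_left.mpr ⟨haT, hst⟩)
      rw [sortedProd_mul_sortedProd_of_disjoint v hst, mul_smul_comm,
        ι_mul_sortedProd_of_mem v (mem_union_right s haT), smul_zero]
    · rw [ih hst, mul_zero]

lemma sortedProd_ι_mul_ι (f e : I → M) (s : Finset I) :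
    sortedProd (fun i => ι R (f i) * ι R (e i)) s
      = (-1 : R) ^ (#s).choose 2 •
          (sortedProd (fun i => ι R (f i)) s * sortedProd (fun i => ι R (e i)) s) := by
  induction s using Finset.induction_on_min with
  | empty => simp
  | insert a s ha ih =>
    simp only [sortedProd_insert_of_lt _ ha, ih, mul_smul_comm, mul_assoc]
    rw [← mul_assoc (ι R (e a)), ι_mul_sortedProd, smul_mul_assoc, mul_smul_comm, smul_smul,
      ← pow_add, card_insert_of_notMem fun h => lt_irrefl a (ha a h), Nat.choose_succ_succ',
      Nat.choose_one_right, add_comm, mul_assoc]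

lemma adjoin_range_ι_le_span_sortedProd :
    Subalgebra.toSubmodule (Algebra.adjoin R (Set.range fun i => ι R (v i)))
      ≤ Submodule.span R (Set.range (sortedProd fun i => ι R (v i))) := by
  set N := Submodule.span R (Set.range (sortedProd fun i => ι R (v i)))
  have hmul : N * N ≤ N := by
    rw [Submodule.span_mul_span, Submodule.span_le]
    rintro _ ⟨_, ⟨s, rfl⟩, _, ⟨t, rfl⟩, rfl⟩
    dsimp only
    by_cases h : Disjoint s t
    · rw [sortedProd_mul_sortedProd_of_disjoint v h]
      exact N.smul_mem _ (Submodule.subset_span ⟨s ∪ t, rfl⟩)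
    · rw [sortedProd_mul_sortedProd_of_not_disjoint v h]
      exact N.zero_mem
  intro x hx
  induction hx using Algebra.adjoin_induction with
  | mem x hx =>
    obtain ⟨a, rfl⟩ := hx
    dsimp only
    rw [← sortedProd_singleton (fun i => ι R (v i)) a]
    exact Submodule.subset_span ⟨{a}, rfl⟩
  | algebraMap r =>
    rw [Algebra.algebraMap_eq_smul_one, ← sortedProd_empty (fun i => ι R (v i))]
    exact N.smul_mem r (Submodule.subset_span ⟨∅, rfl⟩)
  | add x y _ _ hx hy => exact N.add_mem hx hy
  | mul x y _ _ hx hy => exact hmul (Submodule.mul_mem_mul hx hy)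

end Signs

section Berezin

variable {R M I : Type*} [CommRing R] [AddCommGroup M] [Module R M] [Fintype I] [LinearOrder I]

/-- `B` integrates out the generators `ι (e i)` over coefficients generated by the `ι (f i)`. -/
structure IsBerezinIntegral (B : ExteriorAlgebra R M →ₗ[R] ExteriorAlgebra R M) (f e : I → M) :
    Prop where
  apply_mul_top : ∀ ξ ∈ Algebra.adjoin R (Set.range fun i => ι R (f i)),
    B (ξ * sortedProd (fun i => ι R (e i)) univ) = ξ
  apply_mul_of_lt : ∀ ξ ∈ Algebra.adjoin R (Set.range fun i => ι R (f i)),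
    ∀ k < Fintype.card I, ∀ y ∈ Submodule.span R (Set.range fun i => ι R (e i)) ^ k, B (ξ * y) = 0

namespace IsBerezinIntegral

variable {B : ExteriorAlgebra R M →ₗ[R] ExteriorAlgebra R M} {f e : I → M}

lemma apply_mul_sortedProd (hB : IsBerezinIntegral B f e) {ξ : ExteriorAlgebra R M}
    (hξ : ξ ∈ Algebra.adjoin R (Set.range fun i => ι R (f i))) (s : Finset I) :
    B (ξ * sortedProd (fun i => ι R (e i)) s) = if s = univ then ξ else 0 := by
  split_ifs with hs
  · exact hs ▸ hB.apply_mul_top ξ hξ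
  · exact hB.apply_mul_of_lt ξ hξ #s ((card_lt_iff_ne_univ s).mpr hs) _
      (sortedProd_mem_span_pow _ s)

lemma apply_sortedProd_mul_sortedProd_ι_mul_ι (hB : IsBerezinIntegral B f e) (s t : Finset I) :
    B (sortedProd (fun i => ι R (e i)) s * sortedProd (fun i => ι R (f i) * ι R (e i)) t)
      = if t = sᶜ then
          (-1 : R) ^ ((#t).choose 2 + crossInversions t s) • sortedProd (fun i => ι R (f i)) t
        else 0 := by
  have hcentral : sortedProd (fun i => ι R (f i) * ι R (e i)) t ∈ Subalgebra.center R _ :=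
    Algebra.adjoin_le (Set.range_subset_iff.mpr fun i => ι_mul_ι_mem_center _ _)
      (sortedProd_mem_adjoin _ t)
  rw [Subalgebra.mem_center_iff.mp hcentral, sortedProd_ι_mul_ι, smul_mul_assoc, map_smul,
    mul_assoc]
  by_cases hts : Disjoint t s
  · have hcompl : t = sᶜ ↔ t ∪ s = univ := by
      rw [eq_compl_iff_isCompl, isCompl_iff, codisjoint_iff, sup_eq_union, top_eq_univ,
        and_iff_right hts]
    rw [sortedProd_mul_sortedProd_of_disjoint e hts, mul_smul_comm, map_smul,
      hB.apply_mul_sortedProd (sortedProd_mem_adjoin _ t), smul_smul, ← pow_add]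
    simp only [hcompl]
    split_ifs <;> simp
  · rw [sortedProd_mul_sortedProd_of_not_disjoint e hts, mul_zero, map_zero, smul_zero, if_neg]
    rintro rfl
    exact hts disjoint_compl_left

end IsBerezinIntegral

end Berezin

section FourierTransform

variable {𝕜 M I : Type*} [Field 𝕜] [CharZero 𝕜] [AddCommGroup M] [Module 𝕜 M] [Fintype I]
  [LinearOrder I]

def pairingExp (c : 𝕜) (f e : I → M) : ExteriorAlgebra 𝕜 M :=
  ∑ m ∈ range (Fintype.card I + 1),
    (m.factorial : 𝕜)⁻¹ • (c • ∑ i, ι 𝕜 (f i) * ι 𝕜 (e i)) ^ m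

lemma pairingExp_eq_sum (c : 𝕜) (f e : I → M) :
    pairingExp c f e
      = ∑ t ∈ univ.powerset, c ^ #t • sortedProd (fun i => ι 𝕜 (f i) * ι 𝕜 (e i)) t := by
  have hcentral : ∀ i x, Commute (ι 𝕜 (f i) * ι 𝕜 (e i)) x := fun i x =>
    (Subalgebra.mem_center_iff.mp (ι_mul_ι_mem_center _ _) x).symm
  have hcomm : ∀ i j, Commute (c • (ι 𝕜 (f i) * ι 𝕜 (e i))) (c • (ι 𝕜 (f j) * ι 𝕜 (e j))) :=
    fun i j => ((hcentral i _).smul_left c).smul_right c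
  have hsq : ∀ i, c • (ι 𝕜 (f i) * ι 𝕜 (e i)) * c • (ι 𝕜 (f i) * ι 𝕜 (e i)) = 0 := fun i => by
    rw [smul_mul_smul_comm, ι_mul_ι_mul_self, smul_zero]
  rw [pairingExp, smul_sum, ← card_univ, sum_range_factorial_inv_smul_sum_pow hcomm hsq]
  exact sum_congr rfl fun t _ => sortedProd_smul _ c t

variable {B B' : ExteriorAlgebra 𝕜 M →ₗ[𝕜] ExteriorAlgebra 𝕜 M} {f e : I → M}

lemma IsBerezinIntegral.apply_sortedProd_mul_pairingExp (hB : IsBerezinIntegral B f e) (c : 𝕜)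
    (s : Finset I) :
    B (sortedProd (fun i => ι 𝕜 (e i)) s * pairingExp c f e)
      = grassmannFourierCoeff c s • sortedProd (fun i => ι 𝕜 (f i)) sᶜ := by
  simp only [pairingExp_eq_sum, mul_sum, map_sum, mul_smul_comm, map_smul,
    hB.apply_sortedProd_mul_sortedProd_ι_mul_ι, smul_ite, smul_zero, sum_ite_eq', mem_powerset,
    subset_univ, if_true, smul_smul, grassmannFourierCoeff]

theorem IsBerezinIntegral.fourier_fourier (hB : IsBerezinIntegral B f e)
    (hB' : IsBerezinIntegral B' e f) (c : 𝕜) {η : ExteriorAlgebra 𝕜 M}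
    (hη : η ∈ Algebra.adjoin 𝕜 (Set.range fun i => ι 𝕜 (e i))) :
    B' (B (η * pairingExp c f e) * pairingExp c e f)
      = (c ^ Fintype.card I * (-1) ^ (Fintype.card I).choose 2) • η := by
  set κ := c ^ Fintype.card I * (-1) ^ (Fintype.card I).choose 2
  let Φ := B' ∘ₗ LinearMap.mulRight 𝕜 (pairingExp c e f) ∘ₗ B ∘ₗ
    LinearMap.mulRight 𝕜 (pairingExp c f e)
  suffices Submodule.span 𝕜 (Set.range (sortedProd fun i => ι 𝕜 (e i)))
      ≤ LinearMap.eqLocus Φ (κ • LinearMap.id) from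
    this (adjoin_range_ι_le_span_sortedProd e hη)
  rw [Submodule.span_le]
  rintro _ ⟨s, rfl⟩
  simp only [SetLike.mem_coe, LinearMap.mem_eqLocus, Φ, LinearMap.comp_apply,
    LinearMap.mulRight_apply, LinearMap.smul_apply, LinearMap.id_apply]
  rw [hB.apply_sortedProd_mul_pairingExp, smul_mul_assoc, map_smul,
    hB'.apply_sortedProd_mul_pairingExp, compl_compl, smul_smul,
    grassmannFourierCoeff_mul_grassmannFourierCoeff_compl]

end FourierTransform

end ExteriorAlgebra

theorem statement7 {n : ℕ} (hn : Even n)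
    (Ber : Egr n →ₗ[ℂ] Egr n)
    (hBer_top : ∀ ξ ∈ AlgD n, Ber (ξ * psvTop n) = ξ)
    (hBer_low : ∀ ξ ∈ AlgD n, ∀ k < n, ∀ y ∈ ((PV n) ^ k : Submodule ℂ (Egr n)),
      Ber (ξ * y) = 0)
    (BerD : Egr n →ₗ[ℂ] Egr n)
    (hBerD_top : ∀ y ∈ AlgV n, BerD (y * psbTop n) = y)
    (hBerD_low : ∀ y ∈ AlgV n, ∀ k < n, ∀ x ∈ ((PD n) ^ k : Submodule ℂ (Egr n)),
      BerD (y * x) = 0) :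
    ∀ η ∈ AlgV n, BerD (Ber (η * fourierKernel n) * fourierKernelD n) = η := by
  intro η hη
  let d : Fin n → (Fin n → ℂ) × (Fin n → ℂ) := fun a => (Pi.single a 1, 0)
  let v : Fin n → (Fin n → ℂ) × (Fin n → ℂ) := fun a => (0, Pi.single a 1)
  have hBer : ExteriorAlgebra.IsBerezinIntegral Ber d v :=
    ⟨fun ξ hξ => by rw [sortedProd_univ_fin]; exact hBer_top ξ hξ,
      fun ξ hξ k hk => hBer_low ξ hξ k (by simpa using hk)⟩
  have hBerD : ExteriorAlgebra.IsBerezinIntegral BerD v d :=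
    ⟨fun ξ hξ => by rw [sortedProd_univ_fin]; exact hBerD_top ξ hξ,
      fun ξ hξ k hk => hBerD_low ξ hξ k (by simpa using hk)⟩
  have hK : fourierKernel n = ExteriorAlgebra.pairingExp Complex.I d v := by
    simp [fourierKernel, ExteriorAlgebra.pairingExp, psb, psv, d, v]
  have hKD : fourierKernelD n = ExteriorAlgebra.pairingExp Complex.I v d := by
    simp [fourierKernelD, ExteriorAlgebra.pairingExp, psb, psv, d, v]
  rw [hK, hKD, hBer.fourier_fourier hBerD Complex.I hη, Fintype.card_fin,
    Complex.I_pow_mul_neg_one_pow_choose_two hn, one_smul]
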